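/- arXiv:2103.00394 — 2 statements merged into one kernel-verified Lean document; each statement's English description precedes it below -/
import Mathlib

section
/- Let d ∈ ℕ₊, p > 0, σ > 0, ε ∈ (0, d+2p], λ > 0, and let k be the two-moment kernel with these parameters. Then there exists a constant C > 0, depending only on (d, p, σ, ε, λ), such that for all x, y ∈ ℝ^d: k(x,y) ≤ C (1 + ‖x‖^{d+2p+ε} + ‖y‖^{d+2p+ε}). -/
open MeasureTheory ProbabilityTheory Real
open scoped ENNReal NNReal InnerProductSpace

noncomputable section

/-- Euclidean space `ℝ^d`. -/
abbrev Euc (d : ℕ) := EuclideanSpace ℝ (Fin d)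

/-- The optimal transport cost with cost `‖x - y‖ ^ p`, defined as the infimum of
`∫ ‖x − y‖^p dπ` over all couplings `π` of `P` and `Q`. -/
def OTCost {X : Type*} [MeasurableSpace X] [NormedAddCommGroup X] (p : ℝ)
    (P Q : Measure X) : ℝ :=
  ⨅ pl : {pl : Measure (X × X) //
      pl.map Prod.fst = P ∧ pl.map Prod.snd = Q ∧ IsProbabilityMeasure pl},
    ∫ z, ‖z.1 - z.2‖ ^ p ∂(pl.1)

/-- The isotropic Gaussian measure on `ℝ^d` with mean zero and covariance `σ² I_d`. -/
def gaussianMeasure (d : ℕ) (σ : ℝ) : Measure (Euc d) :=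
  (Measure.pi fun _ : Fin d => gaussianReal 0 (σ ^ 2).toNNReal).map
    (MeasurableEquiv.toLp 2 (Fin d → ℝ))

/-- The standard Gaussian measure on `ℝ^d`. -/
def stdGaussian (d : ℕ) : Measure (Euc d) := gaussianMeasure d 1

/-- Gaussian-smoothed optimal transport cost `T_p^{(σ)}(P,Q) = T_p(P ∗ N_σ, Q ∗ N_σ)`. -/
def GOT (d : ℕ) (p σ : ℝ) (P Q : Measure (Euc d)) : ℝ :=
  OTCost p (Measure.conv P (gaussianMeasure d σ)) (Measure.conv Q (gaussianMeasure d σ))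

/-- Empirical measure of the samples `ω 0, …, ω (n-1)`. -/
def empMeasure {X : Type*} [MeasurableSpace X] {n : ℕ} (ω : Fin n → X) : Measure X :=
  (n : ℝ≥0∞)⁻¹ • ∑ i : Fin n, Measure.dirac (ω i)

/-- A symmetric positive-definite kernel. -/
def IsPosDefKernel {X : Type*} (k : X → X → ℝ) : Prop :=
  (∀ x y, k x y = k y x) ∧
    ∀ (n : ℕ) (x : Fin n → X) (c : Fin n → ℝ),
      0 ≤ ∑ i : Fin n, ∑ j : Fin n, c i * c j * k (x i) (x j)

/-- The squared kernel MMD distance `γ_k²(P,Q) = ∬ k d(P−Q) d(P−Q)`. -/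
def mmdSq {X : Type*} [MeasurableSpace X] (k : X → X → ℝ) (P Q : Measure X) : ℝ :=
  (∫ x, ∫ y, k x y ∂P ∂P) + (∫ x, ∫ y, k x y ∂Q ∂Q) - 2 * ∫ x, ∫ y, k x y ∂Q ∂P

/-- The kernel MMD distance `γ_k(P,Q)`. -/
def mmd {X : Type*} [MeasurableSpace X] (k : X → X → ℝ) (P Q : Measure X) : ℝ :=
  Real.sqrt (mmdSq k P Q)

/-- `M_{d,u}(s)`: the `s`-th moment of the noncentral chi distribution with `d` degrees of
freedom and noncentrality parameter `u`, i.e. the `s`-th moment of `‖Z‖` for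
`Z ∼ N(μ, I_d)` with `‖μ‖ = u`. -/
def Mdu (d : ℕ) (u s : ℝ) : ℝ :=
  ∫ z : Fin d → ℝ,
      (Real.sqrt (∑ i : Fin d, (z i + if (i : ℕ) = 0 then u else 0) ^ 2)) ^ s
    ∂(Measure.pi fun _ => gaussianReal 0 1)

/-- `M_d(s) = 2^{s/2} Γ((d+s)/2)/Γ(d/2)`, the `s`-th moment of the chi distribution with `d`
degrees of freedom (extended to real `d`). -/
def Md (d s : ℝ) : ℝ := 2 ^ (s / 2) * Real.Gamma ((d + s) / 2) / Real.Gamma (d / 2)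

/-- `M̄_d(s) = ((d+s)/e)^{s/2} ((d+s)/d)^{(d−1)/2}`. -/
def Mbar (d s : ℝ) : ℝ :=
  ((d + s) / Real.exp 1) ^ (s / 2) * ((d + s) / d) ^ ((d - 1) / 2)

/-- The constant `α_{d,p} = 2π · 2^{−(p+d)} · 2^{−d/2} / Γ(d/2)`. -/
def alphaDP (d : ℕ) (p : ℝ) : ℝ :=
  2 * Real.pi * 2 ^ (-(p + (d : ℝ))) * 2 ^ (-(d : ℝ) / 2) / Real.Gamma ((d : ℝ) / 2)

/-- The function `J` of the two-moment kernel. -/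
def twoMomentJ (d : ℕ) (p eps lam u : ℝ) : ℝ :=
  (lam ^ eps * Mdu d u ((d : ℝ) + 2 * p - eps) +
    lam ^ (-eps) * Mdu d u ((d : ℝ) + 2 * p + eps)) / (2 * eps)

/-- The two-moment kernel with parameters `(d, p, σ, ε, λ)`. -/
def twoMomentKernel (d : ℕ) (p σ eps lam : ℝ) (x y : Euc d) : ℝ :=
  alphaDP d p * Real.exp (-‖x - y‖ ^ 2 / (4 * σ ^ 2)) *
    twoMomentJ d p eps lam (‖x + y‖ / (Real.sqrt 2 * σ))

/-- A (law of a) random vector in `ℝ^d` is sub-gamma with variance parameter `v` and scale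
parameter `b` if `E[exp(⟨α,X⟩)] ≤ exp(v‖α‖²/(2(1−b‖α‖)))` for all `α` with `b‖α‖ < 1`
(for `‖α‖ = 1/b` the right-hand side is `+∞` so the constraint is vacuous). -/
def IsSubGamma {d : ℕ} (μ : Measure (Euc d)) (v b : ℝ) : Prop :=
  ∀ α : Euc d, b * ‖α‖ < 1 →
    ∫ x, Real.exp (⟪α, x⟫_ℝ) ∂μ ≤ Real.exp (v * ‖α‖ ^ 2 / (2 * (1 - b * ‖α‖)))

/-- The Hellinger distance between two probability measures, computed with respect to the
dominating measure `μ + ν`. -/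
def hellingerDist {X : Type*} [MeasurableSpace X] (μ ν : Measure X) : ℝ :=
  Real.sqrt ((1 / 2) * ∫ x,
    (Real.sqrt ((μ.rnDeriv (μ + ν) x).toReal) -
      Real.sqrt ((ν.rnDeriv (μ + ν) x).toReal)) ^ 2 ∂(μ + ν))

/-- `ω_d = 2 π^{d/2} / Γ(d/2)`, the volume (surface area) of the unit sphere in `ℝ^d`. -/
def omegaD (d : ℕ) : ℝ := 2 * Real.pi ^ ((d : ℝ) / 2) / Real.Gamma ((d : ℝ) / 2)

/-- The standard Gaussian density `φ(u) = (2π)^{−d/2} e^{−‖u‖²/2}` on `ℝ^d`. -/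
def gaussPDF (d : ℕ) (u : Euc d) : ℝ :=
  (2 * Real.pi) ^ (-(d : ℝ) / 2) * Real.exp (-‖u‖ ^ 2 / 2)

/-- The feature map
`ψ_x(z) = (√ω_d / 2^{(d+p)/2}) ‖z‖^{(d−1+2p)/2} f(‖z‖)^{−1/2} φ(z/√2 − x/σ)`. -/
def featureMap (d : ℕ) (p σ : ℝ) (f : ℝ → ℝ) (x z : Euc d) : ℝ :=
  Real.sqrt (omegaD d) / 2 ^ (((d : ℝ) + p) / 2) *
    (‖z‖ ^ (((d : ℝ) - 1 + 2 * p) / 2) / Real.sqrt (f ‖z‖)) *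
    gaussPDF d ((Real.sqrt 2)⁻¹ • z - σ⁻¹ • x)

/-- The feature-map kernel `k(x,y) = ∫ ψ_x(z) ψ_y(z) dz`. -/
def featureKernel (d : ℕ) (p σ : ℝ) (f : ℝ → ℝ) (x y : Euc d) : ℝ :=
  ∫ z, featureMap d p σ f x z * featureMap d p σ f y z

/-- The density `g_{d,u}` of the noncentral chi distribution with `d` degrees of freedom and
noncentrality parameter `u`. -/
def noncentralChiPDF (d : ℕ) (u x : ℝ) : ℝ :=
  Real.exp (-(x ^ 2 + u ^ 2) / 2) * x ^ ((d : ℝ) - 1) / 2 ^ ((d : ℝ) / 2 - 1) *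
    ∑' k : ℕ, (u * x / 2) ^ (2 * k) / ((Nat.factorial k : ℝ) * Real.Gamma (((d : ℝ) + 2 * k) / 2))

/-- `I_f(u) = (ω_d / (2^{d+p} (2π)^{d/2})) ∫₀^∞ (x^{d−1+2p}/f(x)) g_{d,u}(x) dx`. -/
def Ifun (d : ℕ) (p : ℝ) (f : ℝ → ℝ) (u : ℝ) : ℝ :=
  omegaD d / (2 ^ ((d : ℝ) + p) * (2 * Real.pi) ^ ((d : ℝ) / 2)) *
    ∫ x in Set.Ioi (0 : ℝ), x ^ ((d : ℝ) - 1 + 2 * p) / f x * noncentralChiPDF d u x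

/-- The radial density `r_σ(x) = (√2/σ) f((√2/σ)x) / (ω_d x^{d−1})`. -/
def rSigma (d : ℕ) (σ : ℝ) (f : ℝ → ℝ) (x : ℝ) : ℝ :=
  Real.sqrt 2 / σ * f (Real.sqrt 2 / σ * x) / (omegaD d * x ^ ((d : ℝ) - 1))

/-! Since `exp (-‖x - y‖² / (4σ²)) ≤ 1`, the kernel is at most `α_{d,p} J(u)` with
`u = ‖x + y‖ / (√2 σ)`. Writing `M_{d,u}(s) = E ‖Z + μ‖^s` for a standard Gaussian `Z`
with `‖μ‖ = u`, the inequality `(a + b)^s ≤ 2^s (a^s + b^s)` gives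
`M_{d,u}(s) ≤ 2^s (M_{d,0}(s) + u^s)`, where `M_{d,0}(s)` is finite because Gaussian
measures have moments of all orders (Fernique). Hence `J(u) = O(1 + u^{d+2p+ε})`, and by the
same inequality `u^{d+2p+ε} = O(‖x‖^{d+2p+ε} + ‖y‖^{d+2p+ε})`. -/

theorem Real.add_rpow_le_two_rpow_mul_rpow_add_rpow {a b p : ℝ} (ha : 0 ≤ a) (hb : 0 ≤ b)
    (hp : 0 ≤ p) : (a + b) ^ p ≤ 2 ^ p * (a ^ p + b ^ p) := calc
  (a + b) ^ p ≤ (2 * max a b) ^ p := by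
    rw [two_mul]; gcongr <;> simp
  _ = 2 ^ p * max a b ^ p := Real.mul_rpow zero_le_two (le_max_of_le_left ha)
  _ ≤ 2 ^ p * (a ^ p + b ^ p) := by
    gcongr
    rcases max_cases a b with ⟨h, _⟩ | ⟨h, _⟩ <;> rw [h]
    · exact le_add_of_nonneg_right (Real.rpow_nonneg hb p)
    · exact le_add_of_nonneg_left (Real.rpow_nonneg ha p)

theorem Real.rpow_le_one_add_rpow {x s t : ℝ} (hx : 0 ≤ x) (hs : 0 ≤ s) (hst : s ≤ t) :
    x ^ s ≤ 1 + x ^ t := by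
  rcases le_total x 1 with h | h
  · linarith [Real.rpow_le_one hx h hs, Real.rpow_nonneg hx t]
  · linarith [Real.rpow_le_rpow_of_exponent_le h hst]

theorem norm_add_rpow_le {E : Type*} [SeminormedAddCommGroup E] (x y : E) {p : ℝ}
    (hp : 0 ≤ p) : ‖x + y‖ ^ p ≤ 2 ^ p * (‖x‖ ^ p + ‖y‖ ^ p) :=
  (Real.rpow_le_rpow (norm_nonneg _) (norm_add_le x y) hp).trans
    (Real.add_rpow_le_two_rpow_mul_rpow_add_rpow (norm_nonneg x) (norm_nonneg y) hp)

theorem integral_norm_add_rpow_le {E : Type*} [NormedAddCommGroup E] [MeasurableSpace E]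
    (μ : Measure E) [IsProbabilityMeasure μ] {p : ℝ} (hp : 0 ≤ p)
    (hμ : Integrable (fun x => ‖x‖ ^ p) μ) (c : E) :
    ∫ x, ‖x + c‖ ^ p ∂μ ≤ 2 ^ p * (∫ x, ‖x‖ ^ p ∂μ + ‖c‖ ^ p) := calc
  ∫ x, ‖x + c‖ ^ p ∂μ ≤ ∫ x, 2 ^ p * (‖x‖ ^ p + ‖c‖ ^ p) ∂μ :=
    integral_mono_of_nonneg (ae_of_all _ fun _ => by positivity)
      ((hμ.add (integrable_const _)).const_mul _) (ae_of_all _ fun x => norm_add_rpow_le x c hp)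
  _ = 2 ^ p * (∫ x, ‖x‖ ^ p ∂μ + ‖c‖ ^ p) := by
    rw [integral_const_mul, integral_add hμ (integrable_const _), integral_const, probReal_univ,
      one_smul]

theorem ProbabilityTheory.IsGaussian.integrable_norm_rpow {E : Type*} [NormedAddCommGroup E]
    [NormedSpace ℝ E] [MeasurableSpace E] [BorelSpace E] [CompleteSpace E]
    [SecondCountableTopology E] (μ : Measure E) [IsGaussian μ] {p : ℝ} (hp : 0 ≤ p) :
    Integrable (fun x => ‖x‖ ^ p) μ := by
  simpa [ENNReal.toReal_ofReal hp] using
    (IsGaussian.memLp_id μ (ENNReal.ofReal p) ENNReal.ofReal_ne_top).integrable_norm_rpow'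

def noncentralityVector (d : ℕ) (u : ℝ) : Euc d :=
  WithLp.toLp 2 fun i => if (i : ℕ) = 0 then u else 0

@[simp]
theorem noncentralityVector_zero (d : ℕ) : noncentralityVector d 0 = 0 := by
  ext i; simp [noncentralityVector]

theorem norm_noncentralityVector {d : ℕ} (hd : 0 < d) (u : ℝ) :
    ‖noncentralityVector d u‖ = |u| := by
  obtain ⟨n, rfl⟩ : ∃ n, d = n + 1 := ⟨d - 1, by omega⟩
  have : noncentralityVector (n + 1) u = PiLp.single 2 0 u := by
    ext i
    rw [PiLp.single_apply]
    simp only [noncentralityVector, PiLp.toLp_apply, Fin.ext_iff, Fin.val_zero]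
  rw [this, PiLp.norm_single, Real.norm_eq_abs]

theorem Mdu_eq_integral_stdGaussian (d : ℕ) (u s : ℝ) :
    Mdu d u s =
      ∫ w, ‖w + noncentralityVector d u‖ ^ s ∂(ProbabilityTheory.stdGaussian (Euc d)) := by
  have hmeas : Measurable fun w : Euc d => ‖w + noncentralityVector d u‖ ^ s := by fun_prop
  rw [← map_pi_eq_stdGaussian, integral_map (by fun_prop) hmeas.aestronglyMeasurable]
  simp [Mdu, EuclideanSpace.norm_eq, noncentralityVector, sq_abs]

theorem Mdu_nonneg (d : ℕ) (u s : ℝ) : 0 ≤ Mdu d u s := by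
  unfold Mdu; positivity

theorem Mdu_le_two_rpow_mul {d : ℕ} (hd : 0 < d) (u : ℝ) {s : ℝ} (hs : 0 ≤ s) :
    Mdu d u s ≤ 2 ^ s * (Mdu d 0 s + |u| ^ s) := by
  simp only [Mdu_eq_integral_stdGaussian, noncentralityVector_zero, add_zero,
    ← norm_noncentralityVector hd u]
  exact integral_norm_add_rpow_le _ hs (IsGaussian.integrable_norm_rpow _ hs) _

theorem Mdu_le_mul_one_add_rpow {d : ℕ} (hd : 0 < d) (u : ℝ) {s t : ℝ} (hs : 0 ≤ s)
    (hst : s ≤ t) : Mdu d u s ≤ 2 ^ s * (Mdu d 0 s + 1) * (1 + |u| ^ t) := calc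
  Mdu d u s ≤ 2 ^ s * (Mdu d 0 s + |u| ^ s) := Mdu_le_two_rpow_mul hd u hs
  _ ≤ 2 ^ s * (Mdu d 0 s + 1) * (1 + |u| ^ t) := by
    have hus := Real.rpow_le_one_add_rpow (abs_nonneg u) hs hst
    have hM := Mdu_nonneg d 0 s
    have hut := Real.rpow_nonneg (abs_nonneg u) t
    rw [mul_assoc]
    gcongr
    nlinarith

theorem twoMomentJ_nonneg (d : ℕ) (p : ℝ) {eps lam : ℝ} (heps : 0 ≤ eps) (hlam : 0 ≤ lam)
    (u : ℝ) : 0 ≤ twoMomentJ d p eps lam u := by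
  have hM₁ := Mdu_nonneg d u (d + 2 * p - eps)
  have hM₂ := Mdu_nonneg d u (d + 2 * p + eps)
  unfold twoMomentJ
  positivity

theorem twoMomentJ_le_mul_one_add_rpow {d : ℕ} (hd : 0 < d) {p eps lam : ℝ} (heps : 0 < eps)
    (heps2 : eps ≤ d + 2 * p) (hlam : 0 < lam) :
    ∃ A > 0, ∀ u, twoMomentJ d p eps lam u ≤ A * (1 + |u| ^ ((d : ℝ) + 2 * p + eps)) := by
  set s₁ := (d : ℝ) + 2 * p - eps
  set s₂ := (d : ℝ) + 2 * p + eps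
  have hs₁ : 0 ≤ s₁ := by linarith
  have hs₁₂ : s₁ ≤ s₂ := by linarith
  have hM₁ := Mdu_nonneg d 0 s₁
  have hM₂ := Mdu_nonneg d 0 s₂
  refine ⟨(lam ^ eps * (2 ^ s₁ * (Mdu d 0 s₁ + 1)) +
    lam ^ (-eps) * (2 ^ s₂ * (Mdu d 0 s₂ + 1))) / (2 * eps), by positivity, fun u => ?_⟩
  calc twoMomentJ d p eps lam u
      = (lam ^ eps * Mdu d u s₁ + lam ^ (-eps) * Mdu d u s₂) / (2 * eps) := rfl
    _ ≤ (lam ^ eps * (2 ^ s₁ * (Mdu d 0 s₁ + 1) * (1 + |u| ^ s₂)) +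
          lam ^ (-eps) * (2 ^ s₂ * (Mdu d 0 s₂ + 1) * (1 + |u| ^ s₂))) / (2 * eps) := by
        gcongr
        · exact Mdu_le_mul_one_add_rpow hd u hs₁ hs₁₂
        · exact Mdu_le_mul_one_add_rpow hd u (hs₁.trans hs₁₂) le_rfl
    _ = _ := by ring

theorem alphaDP_nonneg (d : ℕ) (p : ℝ) : 0 ≤ alphaDP d p := by
  unfold alphaDP; positivity

theorem alphaDP_pos {d : ℕ} (hd : 0 < d) (p : ℝ) : 0 < alphaDP d p := by
  unfold alphaDP; positivity

theorem twoMomentKernel_le_alphaDP_mul_twoMomentJ (d : ℕ) (p σ : ℝ) {eps lam : ℝ}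
    (heps : 0 ≤ eps) (hlam : 0 ≤ lam) (x y : Euc d) :
    twoMomentKernel d p σ eps lam x y ≤
      alphaDP d p * twoMomentJ d p eps lam (‖x + y‖ / (√2 * σ)) := by
  have hexp : Real.exp (-‖x - y‖ ^ 2 / (4 * σ ^ 2)) ≤ 1 :=
    Real.exp_le_one_iff.2 (div_nonpos_of_nonpos_of_nonneg (by simp) (by positivity))
  have hα := alphaDP_nonneg d p
  have hJ := twoMomentJ_nonneg d p heps hlam (‖x + y‖ / (√2 * σ))
  calc twoMomentKernel d p σ eps lam x y
      = alphaDP d p * Real.exp (-‖x - y‖ ^ 2 / (4 * σ ^ 2)) *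
          twoMomentJ d p eps lam (‖x + y‖ / (√2 * σ)) := rfl
    _ ≤ alphaDP d p * 1 * twoMomentJ d p eps lam (‖x + y‖ / (√2 * σ)) := by gcongr
    _ = _ := by rw [mul_one]

theorem abs_norm_add_div_rpow_le {E : Type*} [SeminormedAddCommGroup E] (x y : E) (c : ℝ)
    {t : ℝ} (ht : 0 ≤ t) :
    |‖x + y‖ / c| ^ t ≤ 2 ^ t / |c| ^ t * (‖x‖ ^ t + ‖y‖ ^ t) := by
  rw [abs_div, abs_norm, Real.div_rpow (norm_nonneg _) (abs_nonneg c), div_mul_eq_mul_div]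
  exact div_le_div_of_nonneg_right (norm_add_rpow_le x y ht) (by positivity)

theorem twoMomentKernel_growth_bound_general (d : ℕ) (hd : 0 < d) (p σ eps lam : ℝ)
    (heps : 0 < eps) (heps2 : eps ≤ (d : ℝ) + 2 * p)
    (hlam : 0 < lam) :
    ∃ C : ℝ, 0 < C ∧ ∀ x y : Euc d,
      twoMomentKernel d p σ eps lam x y ≤
        C * (1 + ‖x‖ ^ ((d : ℝ) + 2 * p + eps) + ‖y‖ ^ ((d : ℝ) + 2 * p + eps)) := by
  set t := (d : ℝ) + 2 * p + eps
  have ht : 0 ≤ t := by linarith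
  obtain ⟨A, hA, hJ⟩ := twoMomentJ_le_mul_one_add_rpow hd heps heps2 hlam
  set B := 2 ^ t / |√2 * σ| ^ t
  have hα := alphaDP_pos hd p
  refine ⟨alphaDP d p * A * max 1 B, by positivity, fun x y => ?_⟩
  have hX := Real.rpow_nonneg (norm_nonneg x) t
  have hY := Real.rpow_nonneg (norm_nonneg y) t
  calc twoMomentKernel d p σ eps lam x y
      ≤ alphaDP d p * twoMomentJ d p eps lam (‖x + y‖ / (√2 * σ)) :=
        twoMomentKernel_le_alphaDP_mul_twoMomentJ d p σ heps.le hlam.le x y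
    _ ≤ alphaDP d p * A * (1 + B * (‖x‖ ^ t + ‖y‖ ^ t)) := by
        rw [mul_assoc]
        gcongr
        exact (hJ _).trans (by gcongr; exact abs_norm_add_div_rpow_le x y _ ht)
    _ ≤ alphaDP d p * A * max 1 B * (1 + ‖x‖ ^ t + ‖y‖ ^ t) := by
        rw [mul_assoc _ (max 1 B)]
        gcongr
        nlinarith [le_max_left 1 B, le_max_right 1 B]

/-- polynomial growth bound for the two-moment kernel. -/
theorem twoMomentKernel_growth_bound (d : ℕ) (hd : 0 < d) (p σ eps lam : ℝ)
    (hp : 0 < p) (hσ : 0 < σ) (heps : 0 < eps) (heps2 : eps ≤ (d : ℝ) + 2 * p)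
    (hlam : 0 < lam) :
    ∃ C : ℝ, 0 < C ∧ ∀ x y : Euc d,
      twoMomentKernel d p σ eps lam x y ≤
        C * (1 + ‖x‖ ^ ((d : ℝ) + 2 * p + eps) + ‖y‖ ^ ((d : ℝ) + 2 * p + eps)) :=
  twoMomentKernel_growth_bound_general d hd p σ eps lam heps heps2 hlam

end
end

section
/- Let k be a positive-definite kernel on ℝ^d and let S_1, …, S_n ∈ ℝ^d be (possibly dependent) random vectors with common marginal distribution P satisfying ∫ k(x,x) dP(x) < ∞. For i ≠ j let Q_{ij} be the joint law of (S_i, S_j), and set r_{ij} := E_{Q_{ij}}[k(S_i, S_j)] − E_{P⊗P}[k(X, X')] with X, X' independent draws from P. Then E[γ_k²(P, P_n)] = (1/n) E[γ_k²(P, P_1)] + (1/n²) Σ_{i ≠ j} r_{ij}, where E[γ_k²(P, P_1)] = E[k(X,X)] − E[k(X,X')] is the expected squared MMD under a single independent sample. -/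
/-!
Expanding the integrals against `P_n` gives, pointwise in `ω`,
`γ_k²(P, P_n) = ∬ k dP dP + n⁻² ∑_{i,j} k(S_i, S_j) − 2 n⁻¹ ∑_j ∫ k(x, S_j) dP(x)`.
Since every `S_j` has law `P`, the last sum has expectation `n ∬ k dP dP` and the diagonal
terms `k(S_i, S_i)` have expectation `∫ k(x, x) dP`; splitting the double sum into its diagonal
and off-diagonal parts gives the formula. All these terms are integrable because positive
definiteness on two points yields `|k(x, y)| ≤ (k(x, x) + k(y, y)) / 2`.
-/

open MeasureTheory ProbabilityTheory Real
open scoped ENNReal NNReal InnerProductSpace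

noncomputable section

namespace IsPosDefKernel

variable {X : Type*} {k : X → X → ℝ}

theorem abs_le_half_add (hk : IsPosDefKernel k) (x y : X) :
    |k x y| ≤ (k x x + k y y) / 2 := by
  have hplus := hk.2 2 ![x, y] ![1, 1]
  have hminus := hk.2 2 ![x, y] ![1, -1]
  simp only [Fin.sum_univ_two, Matrix.cons_val_zero, Matrix.cons_val_one] at hplus hminus
  have hsymm := hk.1 y x
  rw [abs_le]
  constructor <;> linarith

theorem integrable_apply [MeasurableSpace X] (hk : IsPosDefKernel k)
    (hkm : Measurable (Function.uncurry k)) {Ω : Type*} [MeasurableSpace Ω] {μ : Measure Ω}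
    {f g : Ω → X} (hf : Measurable f) (hg : Measurable g)
    (hff : Integrable (fun ω => k (f ω) (f ω)) μ) (hgg : Integrable (fun ω => k (g ω) (g ω)) μ) :
    Integrable (fun ω => k (f ω) (g ω)) μ :=
  ((hff.add hgg).div_const 2).mono' (hkm.comp (hf.prodMk hg)).aestronglyMeasurable
    (.of_forall fun _ => (Real.norm_eq_abs _).trans_le (hk.abs_le_half_add _ _))

theorem integrable_uncurry_prod [MeasurableSpace X] (hk : IsPosDefKernel k)
    (hkm : Measurable (Function.uncurry k)) {P : Measure X} [IsFiniteMeasure P]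
    (hint : Integrable (fun x => k x x) P) :
    Integrable (Function.uncurry k) (P.prod P) :=
  hk.integrable_apply hkm measurable_fst measurable_snd (hint.comp_fst P) (hint.comp_snd P)

end IsPosDefKernel

theorem MeasureTheory.MeasurePreserving.integral_comp_of_aestronglyMeasurable
    {Ω X E : Type*} [MeasurableSpace Ω] [MeasurableSpace X] [NormedAddCommGroup E]
    [NormedSpace ℝ E] {μ : Measure Ω} {P : Measure X} {S : Ω → X} (hS : MeasurePreserving S μ P)
    {f : X → E} (hf : AEStronglyMeasurable f P) :
    ∫ ω, f (S ω) ∂μ = ∫ x, f x ∂P := by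
  rw [← hS.map_eq, integral_map hS.measurable.aemeasurable (hS.map_eq ▸ hf)]

section empirical

variable {X : Type*} [MeasurableSpace X] {n : ℕ}

theorem integral_empMeasure (x : Fin n → X) {f : X → ℝ} (hf : Measurable f) :
    ∫ y, f y ∂(empMeasure x) = (1 / (n : ℝ)) * ∑ i, f (x i) := by
  rw [empMeasure, integral_smul_measure, integral_finsetSum_measure
    fun i _ => integrable_dirac' hf.stronglyMeasurable enorm_lt_top]
  simp [integral_dirac' _ _ hf.stronglyMeasurable, ENNReal.toReal_inv, one_div]

theorem mmdSq_empMeasure {k : X → X → ℝ} (hkm : Measurable (Function.uncurry k))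
    {P : Measure X} (hint : ∀ y, Integrable (fun x => k x y) P) (x : Fin n → X) :
    mmdSq k P (empMeasure x) =
      (∫ y, ∫ z, k y z ∂P ∂P) + (1 / (n : ℝ)) ^ 2 * ∑ i, ∑ j, k (x i) (x j)
        - 2 * ((1 / (n : ℝ)) * ∑ j, ∫ y, k y (x j) ∂P) := by
  have hinner : ∀ y, ∫ z, k y z ∂(empMeasure x) = (1 / (n : ℝ)) * ∑ j, k y (x j) :=
    fun y => integral_empMeasure x hkm.of_uncurry_left
  simp only [mmdSq, hinner, integral_const_mul, integral_finsetSum _ fun j _ => hint (x j)]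
  rw [integral_empMeasure x (Finset.measurable_sum _ fun j _ => hkm.of_uncurry_right)]
  ring

end empirical

theorem Finset.sum_sum_eq_sum_add_sum_offDiag {ι M : Type*} [Fintype ι] [DecidableEq ι]
    [AddCommMonoid M] (f : ι → ι → M) :
    ∑ i, ∑ j, f i j = ∑ i, f i i + ∑ q ∈ Finset.univ.offDiag, f q.1 q.2 := by
  rw [← Finset.sum_product', ← Finset.diag_union_offDiag,
    Finset.sum_union (Finset.disjoint_diag_offDiag _), Finset.sum_diag]

theorem integral_mmdSq_empMeasure {X : Type*} [MeasurableSpace X] {k : X → X → ℝ}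
    (hk : IsPosDefKernel k) (hkm : Measurable (Function.uncurry k))
    {Ω : Type*} [MeasurableSpace Ω] (μ : Measure Ω) [IsProbabilityMeasure μ]
    (P : Measure X) [IsFiniteMeasure P]
    {n : ℕ} (hn : 0 < n) (S : Fin n → Ω → X) (hS : ∀ i, MeasurePreserving (S i) μ P)
    (hint : Integrable (fun x => k x x) P) :
    ∫ ω, mmdSq k P (empMeasure fun i => S i ω) ∂μ =
      (1 / (n : ℝ)) ^ 2 * ∑ i, ∑ j, (∫ ω, k (S i ω) (S j ω) ∂μ) - ∫ x, ∫ y, k x y ∂P ∂P := by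
  have hleft : ∀ y, Integrable (fun x => k x y) P := fun y =>
    hk.integrable_apply hkm measurable_id measurable_const hint (integrable_const _)
  have hprod := hk.integrable_uncurry_prod hkm hint
  have hmean : Integrable (fun y => ∫ x, k x y ∂P) P := hprod.integral_prod_right
  have hpair : ∀ i j, Integrable (fun ω => k (S i ω) (S j ω)) μ := fun i j =>
    hk.integrable_apply hkm (hS i).measurable (hS j).measurable
      ((hS i).integrable_comp_of_integrable hint) ((hS j).integrable_comp_of_integrable hint)
  have hsum : Integrable (fun ω => ∑ i, ∑ j, k (S i ω) (S j ω)) μ :=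
    integrable_finsetSum _ fun i _ => integrable_finsetSum _ fun j _ => hpair i j
  have hmeanS : ∀ j, Integrable (fun ω => ∫ x, k x (S j ω) ∂P) μ := fun j =>
    (hS j).integrable_comp_of_integrable hmean
  have hmeanSum : Integrable (fun ω => ∑ j, ∫ x, k x (S j ω) ∂P) μ :=
    integrable_finsetSum _ fun j _ => hmeanS j
  have hEmean : ∀ j, ∫ ω, ∫ x, k x (S j ω) ∂P ∂μ = ∫ x, ∫ y, k x y ∂P ∂P := fun j => by
    rw [(hS j).integral_comp_of_aestronglyMeasurable hmean.aestronglyMeasurable,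
      integral_integral_swap hprod]
  simp only [mmdSq_empMeasure hkm hleft]
  rw [integral_sub, integral_add, integral_const, probReal_univ, one_smul, integral_const_mul,
    integral_const_mul, integral_const_mul, integral_finsetSum _ fun j _ => hmeanS j,
    integral_finsetSum _ fun i _ => integrable_finsetSum _ fun j _ => hpair i j]
  · simp only [hEmean, integral_finsetSum _ fun j _ => hpair _ j, Finset.sum_const,
      Finset.card_univ, Fintype.card_fin, nsmul_eq_mul]
    field_simp
    ring
  exacts [integrable_const _, hsum.const_mul _, (integrable_const _).add (hsum.const_mul _),
    (hmeanSum.const_mul _).const_mul _]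

/-- decomposition of the expected squared MMD for identically distributed
but possibly dependent samples into the i.i.d. term and pairwise-correlation terms. -/
theorem expected_mmdSq_dependent {d : ℕ} (k : Euc d → Euc d → ℝ) (hk : IsPosDefKernel k)
    (hkm : Measurable (Function.uncurry k))
    {Ω : Type*} [MeasurableSpace Ω] (μ : Measure Ω) [IsProbabilityMeasure μ]
    (n : ℕ) (hn : 0 < n) (S : Fin n → Ω → Euc d) (hS : ∀ i, Measurable (S i))
    (P : Measure (Euc d)) (hP : ∀ i, μ.map (S i) = P)
    (hint : Integrable (fun x => k x x) P) :
    (∫ ω, mmdSq k P (empMeasure fun i => S i ω) ∂μ) =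
      (1 / n) * ((∫ x, k x x ∂P) - ∫ x, ∫ y, k x y ∂P ∂P) +
        (1 / (n : ℝ) ^ 2) * ∑ q ∈ Finset.univ.offDiag,
          ((∫ ω, k (S q.1 ω) (S q.2 ω) ∂μ) - ∫ x, ∫ y, k x y ∂P ∂P) := by
  have hpres : ∀ i, MeasurePreserving (S i) μ P := fun i => ⟨hS i, hP i⟩
  have : IsProbabilityMeasure P :=
    hP ⟨0, hn⟩ ▸ Measure.isProbabilityMeasure_map (hS _).aemeasurable
  have hdiag : ∀ i, ∫ ω, k (S i ω) (S i ω) ∂μ = ∫ x, k x x ∂P := fun i =>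
    (hpres i).integral_comp_of_aestronglyMeasurable hint.aestronglyMeasurable
  have hcard : ((Finset.univ.offDiag : Finset (Fin n × Fin n)).card : ℝ) = (n : ℝ) ^ 2 - n := by
    rw [Finset.offDiag_card, Finset.card_univ, Fintype.card_fin, Nat.cast_sub (Nat.le_mul_self n)]
    push_cast
    ring
  rw [integral_mmdSq_empMeasure hk hkm μ P hn S hpres hint,
    Finset.sum_sum_eq_sum_add_sum_offDiag, Finset.sum_sub_distrib, Finset.sum_const,
    nsmul_eq_mul, hcard]
  simp only [hdiag, Finset.sum_const, Finset.card_univ, Fintype.card_fin, nsmul_eq_mul]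
  field_simp
  ring

end
end
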